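/- For every orthonormal family ψ⊥_1, …, ψ⊥_m of vectors in H, each orthogonal to ψ, and each sign s ∈ {+1, −1}, the following hierarchical uncertainty relation holds: ΔA² + ΔB² ≥ s·i⟨[A,B]⟩ + Σ_{k=1}^{m} |⟪ψ, (A + s·i·B) ψ⊥_k⟫|². -/

import Mathlib

open scoped ComplexInnerProductSpace BigOperators

noncomputable section

variable {H : Type*} [NormedAddCommGroup H] [InnerProductSpace ℂ H]

/-- Expectation value ⟨A⟩ = Re ⟪ψ, A ψ⟫ of an operator in the state ψ. -/
def expVal (ψ : H) (A : H →ₗ[ℂ] H) : ℝ := (⟪ψ, A ψ⟫).re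

/-- Variance ΔA² = ⟨A²⟩ − ⟨A⟩². -/
def varOf (ψ : H) (A : H →ₗ[ℂ] H) : ℝ := (⟪ψ, A (A ψ)⟫).re - (expVal ψ A) ^ 2

/-- Standard deviation ΔA = √(ΔA²). -/
def stdDev (ψ : H) (A : H →ₗ[ℂ] H) : ℝ := Real.sqrt (varOf ψ A)

/-- The real number i⟨[A,B]⟩. -/
def commRe (ψ : H) (A B : H →ₗ[ℂ] H) : ℝ :=
  (Complex.I * ⟪ψ, (A ∘ₗ B - B ∘ₗ A) ψ⟫).re

/-- The projection Π = I − |ψ⟩⟨ψ|. -/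
def projPerp (ψ : H) : H →ₗ[ℂ] H :=
  LinearMap.id - ((innerSL ℂ ψ).smulRight ψ).toLinearMap

/-- The deviation operator Ă = A − ⟨A⟩I. -/
def devOp (ψ : H) (A : H →ₗ[ℂ] H) : H →ₗ[ℂ] H :=
  A - (expVal ψ A : ℂ) • LinearMap.id

/-- The operator C = −i[A,B]. -/
def opC (A B : H →ₗ[ℂ] H) : H →ₗ[ℂ] H := (-Complex.I) • (A ∘ₗ B - B ∘ₗ A)

/-- The operator F = ĂB̆ + B̆Ă. -/
def opF (ψ : H) (A B : H →ₗ[ℂ] H) : H →ₗ[ℂ] H :=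
  devOp ψ A ∘ₗ devOp ψ B + devOp ψ B ∘ₗ devOp ψ A

/-! With `Ă = A - ⟨A⟩` and `f = Ăψ - (s i) • B̆ψ`, orthogonality to `ψ` turns
`⟪ψ, (A + s i B) ψ⊥_k⟫` into `⟪f, ψ⊥_k⟫`, so by Bessel's inequality the sum is at most `‖f‖²`;
expanding, `‖f‖² = ΔA² + s² ΔB² - s i⟨[A,B]⟩`, the cross term `-2 Im ⟪Ăψ, B̆ψ⟫` being the
commutator expectation of `Ă, B̆`, which is that of `A, B`. -/

theorem LinearMap.IsSymmetric.inner_apply_self_eq_expVal {A : H →ₗ[ℂ] H} (hA : A.IsSymmetric)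
    (ψ : H) : ⟪ψ, A ψ⟫ = (expVal ψ A : ℂ) :=
  (hA.coe_re_inner_self_apply ψ).symm

theorem isSymmetric_devOp {A : H →ₗ[ℂ] H} (hA : A.IsSymmetric) (ψ : H) :
    (devOp ψ A).IsSymmetric :=
  hA.sub (LinearMap.IsSymmetric.id.smul (Complex.conj_ofReal _))

theorem varOf_eq_norm_devOp_sq {A : H →ₗ[ℂ] H} (hA : A.IsSymmetric) {ψ : H} (hψ : ‖ψ‖ = 1) :
    varOf ψ A = ‖devOp ψ A ψ‖ ^ 2 := by
  have hAψ : ‖A ψ‖ ^ 2 = (⟪ψ, A (A ψ)⟫).re := by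
    rw [← hA, ← inner_self_eq_norm_sq (𝕜 := ℂ)]
    rfl
  rw [devOp, LinearMap.sub_apply, LinearMap.smul_apply, LinearMap.id_apply,
    norm_sub_sq (𝕜 := ℂ), inner_smul_right, hA ψ ψ, hA.inner_apply_self_eq_expVal, norm_smul, hψ,
    hAψ, varOf]
  simp only [RCLike.mul_re, RCLike.re_to_complex, Complex.ofReal_re, RCLike.im_to_complex,
    Complex.ofReal_im, mul_zero, sub_zero, Complex.norm_real, Real.norm_eq_abs, mul_one, sq_abs]
  ring

theorem inner_apply_eq_inner_devOp {A : H →ₗ[ℂ] H} (hA : A.IsSymmetric) {ψ φ : H}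
    (h : ⟪ψ, φ⟫ = 0) : ⟪ψ, A φ⟫ = ⟪devOp ψ A ψ, φ⟫ := by
  simp [devOp, h, hA ψ φ]

theorem commRe_eq_neg_two_mul_im_inner {A B : H →ₗ[ℂ] H} (hA : A.IsSymmetric)
    (hB : B.IsSymmetric) (ψ : H) : commRe ψ A B = -2 * (⟪A ψ, B ψ⟫).im := by
  rw [commRe, LinearMap.sub_apply, inner_sub_right, LinearMap.comp_apply, LinearMap.comp_apply,
    ← hA ψ (B ψ), ← hB ψ (A ψ), ← inner_conj_symm (B ψ) (A ψ)]
  simp only [Complex.mul_re, Complex.I_re, Complex.I_im, Complex.sub_im, Complex.conj_im,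
    Complex.sub_re, Complex.conj_re]
  ring

theorem devOp_comp_sub_comm (ψ : H) (A B : H →ₗ[ℂ] H) :
    devOp ψ A ∘ₗ devOp ψ B - devOp ψ B ∘ₗ devOp ψ A = A ∘ₗ B - B ∘ₗ A := by
  ext x
  simp only [devOp, Complex.coe_smul, LinearMap.sub_apply, LinearMap.coe_comp, Function.comp_apply,
    LinearMap.smul_apply, LinearMap.id_coe, id_eq, map_sub, LinearMap.map_smul_of_tower]
  module

theorem commRe_devOp (ψ : H) (A B : H →ₗ[ℂ] H) :
    commRe ψ (devOp ψ A) (devOp ψ B) = commRe ψ A B := by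
  rw [commRe, devOp_comp_sub_comm, commRe]

theorem norm_sub_ofReal_mul_I_smul_sq (x y : H) (t : ℝ) :
    ‖x - ((t : ℂ) * Complex.I) • y‖ ^ 2 = ‖x‖ ^ 2 + t ^ 2 * ‖y‖ ^ 2 + 2 * t * (⟪x, y⟫).im := by
  rw [norm_sub_sq (𝕜 := ℂ), inner_smul_right, norm_smul]
  simp only [RCLike.mul_re, RCLike.re_to_complex, Complex.ofReal_re, Complex.I_re, mul_zero,
    RCLike.im_to_complex, Complex.ofReal_im, Complex.I_im, mul_one, sub_self, zero_mul,
    RCLike.mul_im, add_zero, zero_sub, mul_neg, sub_neg_eq_add, Complex.norm_mul,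
    Complex.norm_real, Real.norm_eq_abs, Complex.norm_I, mul_pow, sq_abs]
  ring

theorem sum_norm_inner_sq_le_varOf_add {A B : H →ₗ[ℂ] H} (hA : A.IsSymmetric)
    (hB : B.IsSymmetric) {ψ : H} (hψ : ‖ψ‖ = 1) {ι : Type*} {v : ι → H} (hv : Orthonormal ℂ v)
    (hperp : ∀ i, ⟪ψ, v i⟫ = 0) (s : Finset ι) (t : ℝ) :
    ∑ i ∈ s, ‖⟪ψ, (A + ((t : ℂ) * Complex.I) • B) (v i)⟫‖ ^ 2
      ≤ varOf ψ A + t ^ 2 * varOf ψ B - t * commRe ψ A B := by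
  set f := devOp ψ A ψ - ((t : ℂ) * Complex.I) • devOp ψ B ψ
  have hinner : ∀ i, ⟪ψ, (A + ((t : ℂ) * Complex.I) • B) (v i)⟫ = ⟪f, v i⟫ := by
    intro i
    rw [LinearMap.add_apply, LinearMap.smul_apply, inner_add_right, inner_smul_right,
      inner_apply_eq_inner_devOp hA (hperp i), inner_apply_eq_inner_devOp hB (hperp i),
      inner_sub_left, inner_smul_left]
    simp
  have hnorm : ‖f‖ ^ 2 = varOf ψ A + t ^ 2 * varOf ψ B - t * commRe ψ A B := by
    rw [norm_sub_ofReal_mul_I_smul_sq, ← varOf_eq_norm_devOp_sq hA hψ,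
      ← varOf_eq_norm_devOp_sq hB hψ, ← commRe_devOp,
      commRe_eq_neg_two_mul_im_inner (isSymmetric_devOp hA ψ) (isSymmetric_devOp hB ψ)]
    ring
  calc ∑ i ∈ s, ‖⟪ψ, (A + ((t : ℂ) * Complex.I) • B) (v i)⟫‖ ^ 2
      = ∑ i ∈ s, ‖⟪v i, f⟫‖ ^ 2 := by simp_rw [hinner, norm_inner_symm]
    _ ≤ ‖f‖ ^ 2 := hv.sum_inner_products_le f
    _ = _ := hnorm

theorem hierarchical_sum_uncertainty_general
    {H : Type*} [NormedAddCommGroup H] [InnerProductSpace ℂ H]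
    (A B : H →ₗ[ℂ] H) (hA : A.IsSymmetric) (hB : B.IsSymmetric)
    (ψ : H) (hψ : ‖ψ‖ = 1)
    (m : ℕ) (ψperp : Fin m → H) (horth : Orthonormal ℂ ψperp)
    (hperp : ∀ k, ⟪ψ, ψperp k⟫ = 0)
    (s : ℝ) (hs : s = 1 ∨ s = -1) :
    varOf ψ A + varOf ψ B
      ≥ s * commRe ψ A B
        + ∑ k : Fin m, ‖⟪ψ, (A + ((s : ℂ) * Complex.I) • B) (ψperp k)⟫‖ ^ 2 := by
  have hs_sq : s ^ 2 = 1 := by rcases hs with rfl | rfl <;> norm_num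
  have hbound := sum_norm_inner_sq_le_varOf_add hA hB hψ horth hperp Finset.univ s
  rw [hs_sq, one_mul] at hbound
  linarith

theorem hierarchical_sum_uncertainty
    {H : Type*} [NormedAddCommGroup H] [InnerProductSpace ℂ H] [FiniteDimensional ℂ H]
    (A B : H →ₗ[ℂ] H) (hA : A.IsSymmetric) (hB : B.IsSymmetric)
    (ψ : H) (hψ : ‖ψ‖ = 1)
    (m : ℕ) (ψperp : Fin m → H) (horth : Orthonormal ℂ ψperp)
    (hperp : ∀ k, ⟪ψ, ψperp k⟫ = 0)
    (s : ℝ) (hs : s = 1 ∨ s = -1) :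
    varOf ψ A + varOf ψ B
      ≥ s * commRe ψ A B
        + ∑ k : Fin m, ‖⟪ψ, (A + ((s : ℂ) * Complex.I) • B) (ψperp k)⟫‖ ^ 2 :=
  hierarchical_sum_uncertainty_general A B hA hB ψ hψ m ψperp horth hperp s hs
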